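/- Let k ≥ 1 and let E be a finite acyclic R-labelled directed graph such that s(E¹) ∪ t(E¹) = E⁰ ≠ ∅ and such that E satisfies the Chirvasitu Property for k-paths (every two edges of E belong to a common path of length k). Then E is the graph underlying a single open path (e₁,…,e_k) of length k: E has exactly k edges and k+1 pairwise distinct vertices, and the edges form a path of length k. -/
import Mathlib


/-- An `R`-labelled directed graph: vertices, edges, source/target maps and a label map. -/
structure LGraph (R : Type) where
  V : Type
  E : Type
  s : E → V
  t : E → V
  l : E → R

namespace LGraph

variable {R : Type}

/-- `p = (e₁, …, e_k)` is a path of length `k`: `t eᵢ = s eᵢ₊₁` for `1 ≤ i < k`. -/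
def IsPath (G : LGraph R) {k : ℕ} (p : Fin k → G.E) : Prop :=
  ∀ (i : ℕ) (hi : i + 1 < k), G.t (p ⟨i, by omega⟩) = G.s (p ⟨i + 1, hi⟩)

/-- A loop is a (nonempty) path whose source equals its target. -/
def IsLoop (G : LGraph R) {k : ℕ} (p : Fin k → G.E) : Prop :=
  G.IsPath p ∧ ∃ hk : 0 < k, G.s (p ⟨0, hk⟩) = G.t (p ⟨k - 1, by omega⟩)

/-- No repeated edges: edges are determined by their source and target. -/
def NoRepeats (G : LGraph R) : Prop :=
  ∀ e f : G.E, G.s e = G.s f → G.t e = G.t f → e = f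

/-- The weight of a labelled graph: the sum of all labels. -/
noncomputable def wt [CommSemiring R] (G : LGraph R) : R :=
  ∑ᶠ e : G.E, G.l e

/-- The `k`-content of a labelled graph: the sum, over all paths `p` of length `k`,
of the product of the labels of the edges of `p`. -/
noncomputable def ct [CommSemiring R] (G : LGraph R) (k : ℕ) : R :=
  ∑ᶠ p : {p : Fin k → G.E // G.IsPath p}, ∏ i, G.l (p.1 i)

/-- The Chirvasitu property for `k`-paths: every two edges belong to a common
path of length `k`. -/
def Chirvasitu (G : LGraph R) (k : ℕ) : Prop :=
  ∀ e f : G.E, ∃ p : Fin k → G.E, G.IsPath p ∧ (∃ i, p i = e) ∧ (∃ i, p i = f)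

end LGraph

section Aux

variable {R : Type} {G : LGraph R}

private lemma qcongr {n : ℕ} (q : Fin n → G.E) (x y : ℕ) (hx : x < n) (hy : y < n)
    (h : x = y) : q ⟨x, hx⟩ = q ⟨y, hy⟩ := by subst h; rfl

/-- If a path has a vertex `s (q a)` equal to a later `t (q b)`, we get a loop. -/
private lemma seg_loop (hac : ∀ (m : ℕ) (r : Fin m → G.E), ¬ G.IsLoop r)
    {n : ℕ} {q : Fin n → G.E} (hq : G.IsPath q)
    {a b : ℕ} (hab : a ≤ b) (hb : b < n)
    (h : G.s (q ⟨a, by omega⟩) = G.t (q ⟨b, hb⟩)) : False := by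
  refine hac (b - a + 1) (fun i => q ⟨a + i.val, by omega⟩) ⟨?_, by omega, ?_⟩
  · intro i hi
    show G.t (q ⟨a + i, by omega⟩) = G.s (q ⟨a + (i + 1), by omega⟩)
    exact hq (a + i) (by omega)
  · show G.s (q ⟨a, by omega⟩) = G.t (q ⟨a + (b - a), by omega⟩)
    exact h.trans (congrArg G.t (qcongr q b (a + (b - a)) hb (by omega) (by omega)))

private lemma no_src_dup (hac : ∀ (m : ℕ) (r : Fin m → G.E), ¬ G.IsLoop r)
    {n : ℕ} {q : Fin n → G.E} (hq : G.IsPath q)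
    {a b : ℕ} (hab : a < b) (hb : b < n)
    (h : G.s (q ⟨a, by omega⟩) = G.s (q ⟨b, hb⟩)) : False := by
  have h1 : b - 1 + 1 < n := by omega
  have h2 := hq (b - 1) h1
  exact seg_loop hac hq (show a ≤ b - 1 by omega) (by omega)
    ((h.trans (congrArg G.s (qcongr q b (b - 1 + 1) hb h1 (by omega)))).trans h2.symm)

private lemma no_tgt_dup (hac : ∀ (m : ℕ) (r : Fin m → G.E), ¬ G.IsLoop r)
    {n : ℕ} {q : Fin n → G.E} (hq : G.IsPath q)
    {a b : ℕ} (hab : a < b) (hb : b < n)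
    (h : G.t (q ⟨a, by omega⟩) = G.t (q ⟨b, hb⟩)) : False := by
  have h2 := hq a (by omega)
  exact seg_loop hac hq (show a + 1 ≤ b by omega) hb (h2.symm.trans h)

private lemma s_inj {k : ℕ} (hac : ∀ (m : ℕ) (r : Fin m → G.E), ¬ G.IsLoop r)
    (hch : G.Chirvasitu k) : Function.Injective G.s := by
  intro e f h
  obtain ⟨q, hq, ⟨i, hie⟩, ⟨j, hjf⟩⟩ := hch e f
  by_contra hne
  rcases lt_trichotomy (i : ℕ) (j : ℕ) with hij | hij | hij
  · refine no_src_dup hac hq hij j.isLt ?_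
    show G.s (q i) = G.s (q j)
    rw [hie, hjf]; exact h
  · exact hne (by rw [← hie, ← hjf, Fin.ext hij])
  · refine no_src_dup hac hq hij i.isLt ?_
    show G.s (q j) = G.s (q i)
    rw [hie, hjf]; exact h.symm

private lemma t_inj {k : ℕ} (hac : ∀ (m : ℕ) (r : Fin m → G.E), ¬ G.IsLoop r)
    (hch : G.Chirvasitu k) : Function.Injective G.t := by
  intro e f h
  obtain ⟨q, hq, ⟨i, hie⟩, ⟨j, hjf⟩⟩ := hch e f
  by_contra hne
  rcases lt_trichotomy (i : ℕ) (j : ℕ) with hij | hij | hij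
  · refine no_tgt_dup hac hq hij j.isLt ?_
    show G.t (q i) = G.t (q j)
    rw [hie, hjf]; exact h
  · exact hne (by rw [← hie, ← hjf, Fin.ext hij])
  · refine no_tgt_dup hac hq hij i.isLt ?_
    show G.t (q j) = G.t (q i)
    rw [hie, hjf]; exact h.symm

/-- Reachability by a nonempty path. -/
private def Reaches (G : LGraph R) (u v : G.V) : Prop :=
  ∃ n : ℕ, ∃ hn : 0 < n, ∃ q : Fin n → G.E,
    G.IsPath q ∧ G.s (q ⟨0, hn⟩) = u ∧ G.t (q ⟨n - 1, by omega⟩) = v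

private lemma reaches_irrefl (hac : ∀ (m : ℕ) (r : Fin m → G.E), ¬ G.IsLoop r)
    {v : G.V} : ¬ Reaches G v v := by
  rintro ⟨n, hn, q, hq, h0, h1⟩
  exact hac n q ⟨hq, hn, h0.trans h1.symm⟩

private lemma edge_reaches (g : G.E) : Reaches G (G.s g) (G.t g) :=
  ⟨1, one_pos, fun _ => g, fun i hi => absurd hi (by omega), rfl, rfl⟩

private lemma reaches_snoc {u : G.V} {g : G.E} (h : Reaches G u (G.s g)) :
    Reaches G u (G.t g) := by
  obtain ⟨n, hn, q, hq, h0, h1⟩ := h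
  refine ⟨n + 1, by omega, fun i => if h : (i : ℕ) < n then q ⟨i, h⟩ else g, ?_, ?_, ?_⟩
  · intro i hi
    have hi' : i < n := by omega
    show G.t (if h : i < n then q ⟨i, h⟩ else g)
        = G.s (if h : i + 1 < n then q ⟨i + 1, h⟩ else g)
    rw [dif_pos hi']
    by_cases h2 : i + 1 < n
    · rw [dif_pos h2]; exact hq i h2
    · rw [dif_neg h2]
      exact (congrArg G.t (qcongr q i (n - 1) hi' (by omega) (by omega))).trans h1
  · show G.s (if h : 0 < n then q ⟨0, h⟩ else g) = u
    rw [dif_pos hn]; exact h0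
  · show G.t (if h : n < n then q ⟨n, h⟩ else g) = G.t g
    rw [dif_neg (lt_irrefl n)]

private lemma shift {k : ℕ} (hk : 0 < k) {p : Fin k → G.E} (hp : G.IsPath p) {g : G.E}
    (hg : G.t g = G.s (p ⟨0, hk⟩)) :
    ∃ p' : Fin k → G.E, G.IsPath p' ∧ p' ⟨0, hk⟩ = g := by
  refine ⟨fun i => if h : (i : ℕ) = 0 then g else p ⟨(i : ℕ) - 1, by omega⟩, ?_, by simp⟩
  intro i hi
  show G.t (if h : i = 0 then g else p ⟨i - 1, by omega⟩)
      = G.s (if h : i + 1 = 0 then g else p ⟨i + 1 - 1, by omega⟩)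
  rw [dif_neg (Nat.succ_ne_zero i)]
  by_cases h0 : i = 0
  · subst h0
    rw [dif_pos rfl]
    exact hg
  · rw [dif_neg h0]
    exact (hp (i - 1) (by omega)).trans
      (congrArg G.s (qcongr p (i - 1 + 1) i (by omega) (by omega) (by omega)))

private lemma good_start [Finite G.V] {k : ℕ} (hk : 0 < k)
    (hac : ∀ (m : ℕ) (r : Fin m → G.E), ¬ G.IsLoop r)
    (p0 : Fin k → G.E) (hp0 : G.IsPath p0) :
    ∃ p : Fin k → G.E, G.IsPath p ∧ ∀ g : G.E, G.t g ≠ G.s (p ⟨0, hk⟩) := by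
  suffices H : ∀ N : ℕ, ∀ p : Fin k → G.E, G.IsPath p →
      {u | Reaches G u (G.s (p ⟨0, hk⟩))}.ncard ≤ N →
      ∃ p' : Fin k → G.E, G.IsPath p' ∧ ∀ g : G.E, G.t g ≠ G.s (p' ⟨0, hk⟩) from
    H _ p0 hp0 le_rfl
  intro N
  induction N with
  | zero =>
    intro p hp hcard
    refine ⟨p, hp, fun g hg => ?_⟩
    have hmem : G.s g ∈ {u | Reaches G u (G.s (p ⟨0, hk⟩))} := hg ▸ edge_reaches g
    have := (Set.ncard_pos (Set.toFinite _)).mpr ⟨_, hmem⟩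
    omega
  | succ N ih =>
    intro p hp hcard
    by_cases hex : ∃ g : G.E, G.t g = G.s (p ⟨0, hk⟩)
    · obtain ⟨g, hg⟩ := hex
      obtain ⟨p', hp', hp'0⟩ := shift hk hp hg
      refine ih p' hp' ?_
      have hsub : {u | Reaches G u (G.s (p' ⟨0, hk⟩))}
          ⊆ {u | Reaches G u (G.s (p ⟨0, hk⟩))} := by
        intro u hu
        have hu' : Reaches G u (G.s g) := by rwa [hp'0] at hu
        exact hg ▸ reaches_snoc hu'
      have hmem : G.s g ∈ {u | Reaches G u (G.s (p ⟨0, hk⟩))} := hg ▸ edge_reaches g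
      have hnmem : G.s g ∉ {u | Reaches G u (G.s (p' ⟨0, hk⟩))} := by
        rw [hp'0]
        exact reaches_irrefl hac
      have hlt : {u | Reaches G u (G.s (p' ⟨0, hk⟩))}.ncard
          < {u | Reaches G u (G.s (p ⟨0, hk⟩))}.ncard :=
        Set.ncard_lt_ncard ((Set.ssubset_iff_of_subset hsub).mpr ⟨_, hmem, hnmem⟩)
          (Set.toFinite _)
      omega
    · push_neg at hex
      exact ⟨p, hp, hex⟩

end Aux

/-- (Lemma of Chirvasitu, acyclic case.) A finite acyclic `R`-labelled
directed graph with `s(E¹) ∪ t(E¹) = E⁰ ≠ ∅` satisfying the Chirvasitu property for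
`k`-paths is the graph underlying a single open path `(e₁,…,e_k)`: it has exactly `k`
edges and `k + 1` pairwise distinct vertices, and the edges form a path of length `k`. -/
theorem chirvasitu_acyclic_is_path (k : ℕ) (hk : 1 ≤ k)
    {R : Type} [CommSemiring R]
    (G : LGraph R) [Finite G.V] [Finite G.E]
    (hne : ∀ e, G.l e ≠ 0) (hnr : G.NoRepeats)
    (hac : ∀ (m : ℕ) (q : Fin m → G.E), ¬ G.IsLoop q)
    (hVcov : ∀ v : G.V, ∃ e : G.E, G.s e = v ∨ G.t e = v)
    (hVne : Nonempty G.V)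
    (hch : G.Chirvasitu k) :
    Nat.card G.E = k ∧ Nat.card G.V = k + 1 ∧
    ∃ p : Fin k → G.E, G.IsPath p ∧ Function.Bijective p ∧
      Function.Bijective (fun i : Fin (k + 1) =>
        if h : (i : ℕ) < k then G.s (p ⟨i, h⟩) else G.t (p ⟨k - 1, by omega⟩)) := by
  have hk0 : 0 < k := hk
  obtain ⟨v⟩ := hVne
  obtain ⟨e0, -⟩ := hVcov v
  obtain ⟨q0, hq0, -, -⟩ := hch e0 e0
  obtain ⟨p, hp, hstart⟩ := good_start hk0 hac q0 hq0
  have hsinj : Function.Injective G.s := s_inj hac hch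
  -- p is surjective
  have hsurj : Function.Surjective p := by
    intro f
    obtain ⟨q, hq, ⟨i, hi⟩, ⟨j, hj⟩⟩ := hch (p ⟨0, hk0⟩) f
    have hi0 : (i : ℕ) = 0 := by
      by_contra h0
      have h1 := hq ((i : ℕ) - 1) (by omega)
      have e : (⟨(i : ℕ) - 1 + 1, by omega⟩ : Fin k) = i :=
        Fin.ext (show (i : ℕ) - 1 + 1 = (i : ℕ) by omega)
      exact hstart (q ⟨(i : ℕ) - 1, by omega⟩) (h1.trans (by rw [e, hi]))
    have hagree : ∀ m : ℕ, ∀ hm : m < k, q ⟨m, hm⟩ = p ⟨m, hm⟩ := by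
      intro m
      induction m with
      | zero =>
        intro hm
        have e0' : (⟨0, hm⟩ : Fin k) = i := Fin.ext (show (0 : ℕ) = (i : ℕ) by omega)
        rw [e0', hi, ← e0']
      | succ m ihm =>
        intro hm
        have hm' : m < k := by omega
        apply hsinj
        rw [← hq m hm, ← hp m hm, ihm hm']
    refine ⟨⟨(j : ℕ), j.isLt⟩, ?_⟩
    exact (hagree (j : ℕ) j.isLt).symm ▸ (by show q j = f; exact hj)
  have hinjp : Function.Injective p := by
    intro a b hab
    by_contra hne'
    rcases lt_trichotomy (a : ℕ) (b : ℕ) with h | h | h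
    · exact no_src_dup hac hp h b.isLt (show G.s (p a) = G.s (p b) from congrArg G.s hab)
    · exact hne' (Fin.ext h)
    · exact no_src_dup hac hp h a.isLt
        (show G.s (p b) = G.s (p a) from congrArg G.s hab.symm)
  have hbij : Function.Bijective p := ⟨hinjp, hsurj⟩
  have hcardE : Nat.card G.E = k := by
    rw [← Nat.card_eq_of_bijective p hbij]
    simp
  -- the vertex map
  set φ : Fin (k + 1) → G.V := fun i =>
    if h : (i : ℕ) < k then G.s (p ⟨i, h⟩) else G.t (p ⟨k - 1, by omega⟩) with hφ
  have key : ∀ a b : Fin (k + 1), (a : ℕ) < (b : ℕ) → φ a ≠ φ b := by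
    intro a b hab hEq
    have hak : (a : ℕ) < k := by omega
    by_cases hbk : (b : ℕ) < k
    · rw [hφ] at hEq
      simp only [dif_pos hak, dif_pos hbk] at hEq
      exact no_src_dup hac hp hab hbk hEq
    · rw [hφ] at hEq
      simp only [dif_pos hak, dif_neg hbk] at hEq
      exact seg_loop hac hp (show (a : ℕ) ≤ k - 1 by omega) (by omega) hEq
  have hφinj : Function.Injective φ := by
    intro a b hEq
    rcases lt_trichotomy (a : ℕ) (b : ℕ) with h | h | h
    · exact absurd hEq (key a b h)
    · exact Fin.ext h
    · exact absurd hEq.symm (key b a h)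
  have hφsurj : Function.Surjective φ := by
    intro w
    obtain ⟨e, he⟩ := hVcov w
    obtain ⟨i, hie⟩ := hsurj e
    rcases he with hsv | htv
    · refine ⟨⟨(i : ℕ), by omega⟩, ?_⟩
      show (if h : (i : ℕ) < k then G.s (p ⟨(i : ℕ), h⟩) else G.t (p ⟨k - 1, by omega⟩)) = w
      rw [dif_pos i.isLt]
      exact (congrArg G.s (show p ⟨(i : ℕ), i.isLt⟩ = e from hie)).trans hsv
    · by_cases h2 : (i : ℕ) + 1 < k
      · refine ⟨⟨(i : ℕ) + 1, by omega⟩, ?_⟩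
        show (if h : (i : ℕ) + 1 < k then G.s (p ⟨(i : ℕ) + 1, h⟩)
            else G.t (p ⟨k - 1, by omega⟩)) = w
        rw [dif_pos h2]
        exact (hp (i : ℕ) h2).symm.trans
          ((congrArg G.t (show p ⟨(i : ℕ), by omega⟩ = e from hie)).trans htv)
      · refine ⟨⟨k, by omega⟩, ?_⟩
        show (if h : k < k then G.s (p ⟨k, h⟩) else G.t (p ⟨k - 1, by omega⟩)) = w
        rw [dif_neg (lt_irrefl k)]
        have e1 : (⟨k - 1, by omega⟩ : Fin k) = i :=
          Fin.ext (show k - 1 = (i : ℕ) by omega)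
        rw [e1, hie]
        exact htv
  have hφbij : Function.Bijective φ := ⟨hφinj, hφsurj⟩
  have hcardV : Nat.card G.V = k + 1 := by
    rw [← Nat.card_eq_of_bijective φ hφbij]
    simp
  exact ⟨hcardE, hcardV, p, hp, hbij, hφbij⟩
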